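/- Let M be a matroid of rank k on E and F a stressed subset with rk(F) = r and |F| = h. Then the Tutte polynomial of the relaxation satisfies T_{Rel(M,F)}(x,y) − T_M(x,y) = ∑_{i=r+1}^{h} ∑_{j=0}^{k−r−1} (h choose i)·((n−h) choose j)·α(i,j), where α(i,j) = (x−1)^{k−i−j}(1 − ((x−1)(y−1))^{i−r}) if i+j ≤ k and α(i,j) = (y−1)^{i+j−k}(1 − ((x−1)(y−1))^{k−r−j}) if i+j > k. -/

import Mathlib

open Set

variable {α : Type*}

/-- The (natural-number valued) rank of a set `X` in a matroid `M`:
the maximum cardinality of an independent subset of `X`. -/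
noncomputable def Matroid.nrk (M : Matroid α) (X : Set α) : ℕ :=
  sSup (Set.ncard '' {I | M.Indep I ∧ I ⊆ X})

/-- The rank of the matroid `M`. -/
noncomputable def Matroid.nRank (M : Matroid α) : ℕ := M.nrk M.E

/-- The cusp of a subset `A` in a matroid `M` of rank `k`:
all `k`-element subsets `S` of the ground set with `|S ∩ A| ≥ rk A + 1`. -/
def Matroid.cusp (M : Matroid α) (A : Set α) : Set (Set α) :=
  {S | S ⊆ M.E ∧ S.ncard = M.nRank ∧ M.nrk A + 1 ≤ (S ∩ A).ncard}

/-- A subset `A` of a matroid `M` is stressed if both the restriction `M | A`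
and the contraction `M / A` are uniform matroids; for a finite matroid this is
equivalent to the rank functions of the restriction and of the contraction being
those of uniform matroids. -/
def Matroid.StressedSubset (M : Matroid α) (A : Set α) : Prop :=
  (∀ S ⊆ A, M.nrk S = min S.ncard (M.nrk A)) ∧
  (∀ Y ⊆ M.E \ A, M.nrk (A ∪ Y) = M.nrk A + min Y.ncard (M.nRank - M.nrk A))



/-! For `A ⊆ E` write `i = |A ∩ F|` and `j = |A \ F|`. Because `F` is stressed, submodularity
pins down `rk_M A = r + min j (k - r)` as soon as `i ≥ r`, and gives the lower bound
`min i r + min j (k - r)` in general. A cusp set meets `F` in more than `r` elements, hence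
`E \ F` in fewer than `k - r`, so the new bases can only raise the rank of sets with `i > r`;
there a cusp set meeting `A` maximally shows `rk' A = min (i + j) k`. The Tutte summand of `A`
therefore changes by `α(i, j)` exactly when `i > r` and `j < k - r`, and there are
`C(h, i) * C(n - h, j)` sets with given `(i, j)`. -/

/-- The paper's `α(i, j)`, with `a = x - 1` and `b = y - 1`. -/
def relaxationTerm {R : Type*} [CommRing R] (k r i j : ℕ) (a b : R) : R :=
  if i + j ≤ k then a ^ (k - i - j) * (1 - (a * b) ^ (i - r))
  else b ^ (i + j - k) * (1 - (a * b) ^ (k - r - j))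

lemma relaxationTerm_eq_sub {R : Type*} [CommRing R] (a b : R) {k r i j : ℕ} (hi : r < i)
    (hj : r + j < k) :
    a ^ (k - min (i + j) k) * b ^ (i + j - min (i + j) k) -
        a ^ (k - (r + j)) * b ^ (i + j - (r + j)) = relaxationTerm k r i j a b := by
  unfold relaxationTerm
  split_ifs with hijk
  · rw [min_eq_left hijk, Nat.sub_self, Nat.sub_add_eq,
      show k - (r + j) = k - i - j + (i - r) by omega, show i + j - (r + j) = i - r by omega]
    ring
  · rw [min_eq_right (by omega), Nat.sub_self, show k - (r + j) = k - r - j by omega,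
      show i + j - (r + j) = i + j - k + (k - r - j) by omega]
    ring

lemma Finset.sum_univ_eq_sum_choose_mul_choose [Fintype α] {R : Type*}
    [CommSemiring R] (S : Set α) (f : ℕ → ℕ → R) :
    ∑ A : Finset α, f ((A : Set α) ∩ S).ncard ((A : Set α) \ S).ncard =
      ∑ i ∈ range (S.ncard + 1), ∑ j ∈ range (Sᶜ.ncard + 1),
        (S.ncard.choose i : R) * (Sᶜ.ncard.choose j : R) * f i j := by
  classical
  rw [Set.ncard_eq_toFinset_card' S, Set.ncard_eq_toFinset_card' Sᶜ, Set.toFinset_compl]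
  set s := S.toFinset
  calc ∑ A : Finset α, f ((A : Set α) ∩ S).ncard ((A : Set α) \ S).ncard
      = ∑ A : Finset α, f (A ∩ s).card (A \ s).card := by
        simp only [s, ← Set.ncard_coe_finset, coe_inter, coe_sdiff, Set.coe_toFinset]
    _ = ∑ P ∈ s.powerset, ∑ Q ∈ sᶜ.powerset, f P.card Q.card := by
        rw [← sum_product']
        refine sum_nbij' (fun A => (A ∩ s, A \ s)) (fun p => p.1 ∪ p.2) ?_ ?_ ?_ ?_ ?_
        · simp
        · simp
        · intro A _
          rw [union_comm, sdiff_union_inter]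
        · rintro ⟨P, Q⟩ hPQ
          simp only [mem_product, mem_powerset, subset_iff, mem_compl] at hPQ
          ext a <;> grind
        · simp
    _ = _ := by
        rw [sum_congr rfl fun P _ => sum_powerset_apply_card (f P.card), sum_powerset_apply_card
          fun i => ∑ j ∈ range (sᶜ.card + 1), sᶜ.card.choose j • f i j]
        simp only [smul_sum, nsmul_eq_mul, mul_assoc]

namespace Matroid

def IsRelaxation (M' M : Matroid α) (F : Set α) : Prop :=
  M'.E = M.E ∧ ∀ B, M'.IsBase B ↔ M.IsBase B ∨ B ∈ M.cusp F

lemma IsRelaxation.isBase_of_isBase {M M' : Matroid α} {F B : Set α} (h : M'.IsRelaxation M F)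
    (hB : M.IsBase B) : M'.IsBase B :=
  (h.2 B).2 (Or.inl hB)

variable [Finite α] {M M' : Matroid α} {A B F I S X Y : Set α}

lemma IsBasis'.nrk_eq (hI : M.IsBasis' I X) : M.nrk X = I.ncard := by
  refine IsGreatest.csSup_eq ⟨⟨I, ⟨hI.indep, hI.subset⟩, rfl⟩, ?_⟩
  rintro _ ⟨J, ⟨hJ, hJX⟩, rfl⟩
  have hle : J.encard ≤ I.encard := hI.eRk_eq_encard ▸ hJ.encard_le_eRk_of_subset hJX
  rwa [← J.toFinite.cast_ncard_eq, ← I.toFinite.cast_ncard_eq, Nat.cast_le] at hle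

lemma natCast_nrk (M : Matroid α) (X : Set α) : (M.nrk X : ℕ∞) = M.eRk X := by
  obtain ⟨I, hI⟩ := M.exists_isBasis' X
  rw [hI.nrk_eq, hI.eRk_eq_encard, I.toFinite.cast_ncard_eq]

lemma nrk_mono (M : Matroid α) (hXY : X ⊆ Y) : M.nrk X ≤ M.nrk Y := by
  have h := M.eRk_mono hXY
  rwa [← natCast_nrk, ← natCast_nrk, Nat.cast_le] at h

lemma nrk_le_ncard (M : Matroid α) (X : Set α) : M.nrk X ≤ X.ncard := by
  have h := M.eRk_le_encard X
  rwa [← natCast_nrk, ← X.toFinite.cast_ncard_eq, Nat.cast_le] at h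

lemma nrk_inter_add_nrk_union_le (M : Matroid α) (X Y : Set α) :
    M.nrk (X ∩ Y) + M.nrk (X ∪ Y) ≤ M.nrk X + M.nrk Y := by
  have h := M.eRk_inter_add_eRk_union_le X Y
  simp only [← natCast_nrk] at h
  exact_mod_cast h

lemma Indep.ncard_le_nrk (hI : M.Indep I) (hIX : I ⊆ X) : I.ncard ≤ M.nrk X := by
  have h := hI.encard_le_eRk_of_subset hIX
  rwa [← natCast_nrk, ← I.toFinite.cast_ncard_eq, Nat.cast_le] at h

lemma IsBase.ncard_eq_nRank (hB : M.IsBase B) : B.ncard = M.nRank :=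
  hB.isBasis_ground.isBasis'.nrk_eq.symm

lemma IsBase.ncard_inter_le_nrk (hB : M.IsBase B) (X : Set α) : (X ∩ B).ncard ≤ M.nrk X :=
  (hB.indep.subset inter_subset_right).ncard_le_nrk inter_subset_left

lemma exists_isBase_ncard_inter_eq_nrk (hX : X ⊆ M.E) :
    ∃ B, M.IsBase B ∧ (X ∩ B).ncard = M.nrk X := by
  obtain ⟨I, hI⟩ := M.exists_isBasis X
  obtain ⟨B, hB, rfl⟩ := hI.exists_isBase
  exact ⟨B, hB, by rw [hI.isBasis'.nrk_eq, inter_comm]⟩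

lemma StressedSubset.nrk_le (hF : M.StressedSubset F) (hA : A ⊆ M.E) :
    M.nrk A ≤ M.nrk F + min (A \ F).ncard (M.nRank - M.nrk F) := by
  rw [← hF.2 (A \ F) (sdiff_subset_sdiff_left hA), union_sdiff_self]
  exact M.nrk_mono subset_union_right

lemma StressedSubset.min_add_min_le_nrk (hF : M.StressedSubset F) (hA : A ⊆ M.E) :
    min (A ∩ F).ncard (M.nrk F) + min (A \ F).ncard (M.nRank - M.nrk F) ≤ M.nrk A := by
  have hsub := M.nrk_inter_add_nrk_union_le A F
  rw [hF.1 _ inter_subset_right, union_comm, ← union_sdiff_self,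
    hF.2 _ (sdiff_subset_sdiff_left hA)] at hsub
  omega

lemma StressedSubset.nrk_eq_of_nrk_le_ncard_inter (hF : M.StressedSubset F) (hA : A ⊆ M.E)
    (hi : M.nrk F ≤ (A ∩ F).ncard) :
    M.nrk A = M.nrk F + min (A \ F).ncard (M.nRank - M.nrk F) := by
  have := hF.min_add_min_le_nrk hA
  have := hF.nrk_le hA
  omega

lemma ncard_inter_le_of_mem_cusp (hS : S ∈ M.cusp F) (A : Set α) :
    (A ∩ S).ncard ≤ (A ∩ F).ncard + min (A \ F).ncard (M.nRank - M.nrk F) := by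
  obtain ⟨-, hSk, hSF⟩ := hS
  have h₁ := ncard_inter_add_ncard_sdiff_eq_ncard (A ∩ S) F
  have h₂ := ncard_inter_add_ncard_sdiff_eq_ncard S F
  have h₃ : (A ∩ S ∩ F).ncard ≤ (A ∩ F).ncard := ncard_le_ncard (by grind)
  have h₄ : ((A ∩ S) \ F).ncard ≤ (A \ F).ncard := ncard_le_ncard (by grind)
  have h₅ : ((A ∩ S) \ F).ncard ≤ (S \ F).ncard := ncard_le_ncard (by grind)
  omega

lemma exists_mem_cusp_ncard_inter_eq (hA : A ⊆ M.E) (hi : M.nrk F < (A ∩ F).ncard)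
    (hk : M.nrk F < M.nRank) : ∃ S ∈ M.cusp F, (A ∩ S).ncard = min A.ncard M.nRank := by
  rcases le_or_gt A.ncard M.nRank with hAk | hkA
  · obtain ⟨S, hAS, hSE, hS⟩ := exists_subsuperset_card_eq hA hAk (M.nrk_le_ncard M.E)
    refine ⟨S, ⟨hSE, hS, hi.trans_le (ncard_le_ncard ?_)⟩, ?_⟩
    · exact inter_subset_inter_left F hAS
    · rw [inter_eq_left.mpr hAS, min_eq_left hAk]
  · obtain ⟨T, hT, hTcard⟩ := exists_subset_card_eq hi
    obtain ⟨S, hTS, hSA, hS⟩ :=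
      exists_subsuperset_card_eq (hT.trans inter_subset_left) (hTcard ▸ hk) hkA.le
    refine ⟨S, ⟨hSA.trans hA, hS, ?_⟩, ?_⟩
    · rw [← Nat.succ_eq_add_one, ← hTcard]
      exact ncard_le_ncard (subset_inter hTS (hT.trans inter_subset_right))
    · rw [inter_eq_right.mpr hSA, hS, min_eq_right hkA.le]

lemma IsRelaxation.nRank_eq (h : M'.IsRelaxation M F) : M'.nRank = M.nRank := by
  obtain ⟨B, hB⟩ := M.exists_isBase
  rw [← (h.isBase_of_isBase hB).ncard_eq_nRank, hB.ncard_eq_nRank]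

lemma IsRelaxation.nrk_le_nrk (h : M'.IsRelaxation M F) (hA : A ⊆ M.E) :
    M.nrk A ≤ M'.nrk A := by
  obtain ⟨B, hB, hAB⟩ := exists_isBase_ncard_inter_eq_nrk hA
  exact hAB ▸ (h.isBase_of_isBase hB).ncard_inter_le_nrk A

lemma IsRelaxation.nrk_eq_of_ncard_inter_le (h : M'.IsRelaxation M F) (hF : M.StressedSubset F)
    (hA : A ⊆ M.E) (hi : (A ∩ F).ncard ≤ M.nrk F) : M'.nrk A = M.nrk A := by
  refine le_antisymm ?_ (h.nrk_le_nrk hA)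
  obtain ⟨B, hB, hAB⟩ := exists_isBase_ncard_inter_eq_nrk (h.1 ▸ hA)
  rw [← hAB]
  rcases (h.2 B).1 hB with hB | hB
  · exact hB.ncard_inter_le_nrk A
  · have := ncard_inter_le_of_mem_cusp hB A
    have := hF.min_add_min_le_nrk hA
    omega

lemma IsRelaxation.nrk_eq_min_of_nrk_lt_ncard_inter (h : M'.IsRelaxation M F) (hA : A ⊆ M.E)
    (hi : M.nrk F < (A ∩ F).ncard) (hk : M.nrk F < M.nRank) :
    M'.nrk A = min A.ncard M.nRank := by
  refine le_antisymm (le_min (M'.nrk_le_ncard A) ?_) ?_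
  · exact h.nRank_eq ▸ M'.nrk_mono (h.1 ▸ hA)
  · obtain ⟨S, hS, hAS⟩ := exists_mem_cusp_ncard_inter_eq hA hi hk
    exact hAS ▸ ((h.2 S).2 (Or.inr hS)).ncard_inter_le_nrk A

lemma IsRelaxation.tutte_summand_sub {R : Type*} [CommRing R] (h : M'.IsRelaxation M F)
    (hF : M.StressedSubset F) (hA : A ⊆ M.E) (a b : R) :
    a ^ (M'.nRank - M'.nrk A) * b ^ (A.ncard - M'.nrk A) -
        a ^ (M.nRank - M.nrk A) * b ^ (A.ncard - M.nrk A) =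
      if M.nrk F < (A ∩ F).ncard ∧ (A \ F).ncard < M.nRank - M.nrk F then
        relaxationTerm M.nRank (M.nrk F) (A ∩ F).ncard (A \ F).ncard a b
      else 0 := by
  rw [h.nRank_eq]
  by_cases hi : M.nrk F < (A ∩ F).ncard
  swap
  · rw [h.nrk_eq_of_ncard_inter_le hF hA (not_lt.1 hi), sub_self, if_neg fun hc => hi hc.1]
  have hM := hF.nrk_eq_of_nrk_le_ncard_inter hA hi.le
  by_cases hj : (A \ F).ncard < M.nRank - M.nrk F
  · rw [if_pos ⟨hi, hj⟩, h.nrk_eq_min_of_nrk_lt_ncard_inter hA hi (by omega), hM,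
      min_eq_left hj.le, ← ncard_inter_add_ncard_sdiff_eq_ncard A F]
    exact relaxationTerm_eq_sub a b hi (by omega)
  · have hM' : M'.nrk A = M.nrk A := by
      refine le_antisymm ?_ (h.nrk_le_nrk hA)
      have := M'.nrk_mono (h.1 ▸ hA)
      rw [← nRank, h.nRank_eq] at this
      omega
    rw [hM', sub_self, if_neg fun hc => hj hc.2]

end Matroid

theorem tutte_relaxation_general [Fintype α] (M M' : Matroid α) (hE : M.E = Set.univ)
    {n k r h : ℕ} (hn : Fintype.card α = n) (hk : M.nRank = k) {F : Set α}
    (hstr : M.StressedSubset F) (hr : M.nrk F = r) (hh : F.ncard = h)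
    (hE' : M'.E = M.E) (hB : ∀ B, M'.IsBase B ↔ M.IsBase B ∨ B ∈ M.cusp F)
    (x y : ℤ) :
    (∑ A : Finset α,
        (x - 1) ^ (M'.nRank - M'.nrk (A : Set α)) * (y - 1) ^ (A.card - M'.nrk (A : Set α))) -
      (∑ A : Finset α,
        (x - 1) ^ (M.nRank - M.nrk (A : Set α)) * (y - 1) ^ (A.card - M.nrk (A : Set α))) =
    ∑ i ∈ Finset.Icc (r + 1) h, ∑ j ∈ Finset.range (k - r),
      (h.choose i : ℤ) * ((n - h).choose j : ℤ) *
        (if i + j ≤ k then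
          (x - 1) ^ (k - i - j) * (1 - ((x - 1) * (y - 1)) ^ (i - r))
         else
          (y - 1) ^ (i + j - k) * (1 - ((x - 1) * (y - 1)) ^ (k - r - j))) := by
  have hcompl : Fᶜ.ncard = n - h := by
    rw [Set.ncard_compl, Nat.card_eq_fintype_card, hn, hh]
  have hkr : k - r ≤ n - h := by
    have := hstr.nrk_le subset_rfl
    rw [← Matroid.nRank, hk, hr, hE, ← compl_eq_univ_sdiff, hcompl] at this
    omega
  rw [← Finset.sum_sub_distrib]
  calc _ = ∑ A : Finset α,
          if r < ((A : Set α) ∩ F).ncard ∧ ((A : Set α) \ F).ncard < k - r then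
            relaxationTerm k r ((A : Set α) ∩ F).ncard ((A : Set α) \ F).ncard (x - 1) (y - 1)
          else 0 := by
        refine Finset.sum_congr rfl fun A _ => ?_
        rw [← Set.ncard_coe_finset, ← hk, ← hr]
        exact Matroid.IsRelaxation.tutte_summand_sub ⟨hE', hB⟩ hstr (hE ▸ subset_univ _) _ _
    _ = ∑ i ∈ Finset.range (h + 1), ∑ j ∈ Finset.range (n - h + 1),
          (h.choose i : ℤ) * ((n - h).choose j : ℤ) *
            if r < i ∧ j < k - r then relaxationTerm k r i j (x - 1) (y - 1) else 0 := by
        rw [Finset.sum_univ_eq_sum_choose_mul_choose F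
          fun i j => if r < i ∧ j < k - r then relaxationTerm k r i j (x - 1) (y - 1) else 0, hh,
          hcompl]
    _ = ∑ i ∈ Finset.Icc (r + 1) h, ∑ j ∈ Finset.range (k - r),
          (h.choose i : ℤ) * ((n - h).choose j : ℤ) *
            relaxationTerm k r i j (x - 1) (y - 1) := by
        rw [← Finset.sum_product', ← Finset.sum_product']
        simp only [mul_ite, mul_zero]
        rw [← Finset.sum_filter]
        congr 1
        ext ⟨i, j⟩
        simp only [Finset.mem_filter, Finset.mem_product, Finset.mem_range, Finset.mem_Icc]
        omega

/-- the change of the Tutte polynomial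
`T_N(x,y) = ∑_{A ⊆ E} (x−1)^{rk N − rk_N A}·(y−1)^{|A| − rk_N A}` under the relaxation of a
stressed subset `F` of rank `r` and size `h` in a rank-`k` matroid `M` on `n` elements:
`T_{Rel(M,F)}(x,y) − T_M(x,y) = ∑_{i=r+1}^{h} ∑_{j=0}^{k−r−1} (h choose i)·(n−h choose j)·α(i,j)`
with `α(i,j) = (x−1)^{k−i−j}(1 − ((x−1)(y−1))^{i−r})` if `i+j ≤ k` and
`α(i,j) = (y−1)^{i+j−k}(1 − ((x−1)(y−1))^{k−r−j})` if `i+j > k`. -/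
theorem tutte_relaxation [Fintype α] (M M' : Matroid α) (hE : M.E = Set.univ)
    {n k r h : ℕ} (hn : Fintype.card α = n) (hk : M.nRank = k) {F : Set α}
    (hF : F ⊆ M.E) (hstr : M.StressedSubset F) (hr : M.nrk F = r) (hh : F.ncard = h)
    (hE' : M'.E = M.E) (hB : ∀ B, M'.IsBase B ↔ M.IsBase B ∨ B ∈ M.cusp F)
    (x y : ℤ) :
    (∑ A : Finset α,
        (x - 1) ^ (M'.nRank - M'.nrk (A : Set α)) * (y - 1) ^ (A.card - M'.nrk (A : Set α))) -
      (∑ A : Finset α,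
        (x - 1) ^ (M.nRank - M.nrk (A : Set α)) * (y - 1) ^ (A.card - M.nrk (A : Set α))) =
    ∑ i ∈ Finset.Icc (r + 1) h, ∑ j ∈ Finset.range (k - r),
      (h.choose i : ℤ) * ((n - h).choose j : ℤ) *
        (if i + j ≤ k then
          (x - 1) ^ (k - i - j) * (1 - ((x - 1) * (y - 1)) ^ (i - r))
         else
          (y - 1) ^ (i + j - k) * (1 - ((x - 1) * (y - 1)) ^ (k - r - j))) :=
  tutte_relaxation_general M M' hE hn hk hstr hr hh hE' hB x y
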